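/- Let k ⊆ K be a separable field extension of characteristic p > 0. A subset A of k is p-independent in k if and only if A is p-independent in K. -/

import Mathlib

/-! If `a ∈ K^p(A \ {a})`, then already `a ∈ K^p(T)` for a finite `T ⊆ A \ {a}`, and since every
`t ∈ T` satisfies `t ^ p ∈ K^p`, the field `K^p(T)` is spanned over `K^p` by the `p`-monomials
`∏ t ^ e t` with `e t < p`. On the other hand, `p`-independence of `{a} ∪ T` in `k` makes the
`p`-monomials in `{a} ∪ T` linearly independent over `k^p`, and linear disjointness of `k` and
`K^p` over `k^p` keeps them independent over `K^p`; this contradicts `a` being a `K^p`-combination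
of the monomials in `T`. The converse holds because `k^p ⊆ K^p`. -/

/-- Subfields `L` and `M` of an ambient field are linearly disjoint over a common
subfield `F` if every finite tuple of elements of `L` that is linearly independent
over `F` remains linearly independent over `M`. -/
def LinDisj {K : Type*} [Field K] (F L M : Subfield K) : Prop :=
  ∀ (n : ℕ) (a : Fin n → K), (∀ i, a i ∈ L) →
    LinearIndependent ↥F a → LinearIndependent ↥M a

open IntermediateField

theorem Subfield.mem_sup_closure_iff_mem_adjoin {K : Type*} [Field K] (F : Subfield K)
    (S : Set K) (x : K) : x ∈ F ⊔ Subfield.closure S ↔ x ∈ adjoin F S := by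
  rw [← mem_toSubfield, adjoin_toSubfield, Subfield.closure_union,
    show Set.range (algebraMap F K) = F from Subtype.range_coe, Subfield.closure_eq]

theorem LinDisj.linearIndependent {K : Type*} [Field K] {F L M : Subfield K}
    (h : LinDisj F L M) {ι : Type*} [Fintype ι] {a : ι → K} (haL : ∀ i, a i ∈ L)
    (ha : LinearIndependent F a) : LinearIndependent M a := by
  let σ := Fintype.equivFin ι
  have := h _ (a ∘ σ.symm) (fun i => haL _) (ha.comp σ.symm σ.symm.injective)
  simpa [Function.comp_assoc] using this.comp σ σ.injective

open Polynomial in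
theorem linearIndependent_pow_of_pow_mem {L K : Type*} [Field L] [Field K] [Algebra L K]
    (p : ℕ) [Fact p.Prime] [CharP K p] {a : K} (ha : a ∉ Set.range (algebraMap L K)) {b : L}
    (hb : algebraMap L K b = a ^ p) : LinearIndependent L fun j : Fin p => a ^ (j : ℕ) := by
  have hp : p.Prime := Fact.out
  have hirr : Irreducible (X ^ p - C b) :=
    X_pow_sub_C_irreducible_of_prime hp fun c hc =>
      ha ⟨c, frobenius_inj K p (by rw [frobenius_def, frobenius_def, ← map_pow, hc, hb])⟩
  have hdeg : (minpoly L a).natDegree = p := by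
    rw [← minpoly.eq_of_irreducible_of_monic hirr (by simp [hb]) (monic_X_pow_sub_C b hp.ne_zero),
      natDegree_X_pow_sub_C]
  have := linearIndependent_pow (K := L) a
  rwa [hdeg] at this

section pMonomial

variable {K : Type*} [Field K] (p : ℕ)

def pMonomial {ι : Type*} [Fintype ι] (v : ι → K) (e : ι → Fin p) : K :=
  ∏ i, v i ^ (e i : ℕ)

theorem pMonomial_cons {n : ℕ} (v : Fin (n + 1) → K) (j : Fin p) (e : Fin n → Fin p) :
    pMonomial p v (Fin.cons j e) = v 0 ^ (j : ℕ) * pMonomial p (Fin.tail v) e := by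
  simp [pMonomial, Fin.prod_univ_succ, Fin.tail]

theorem prod_pow_eq_mul_pMonomial {ι : Type*} [Fintype ι] (hp : 0 < p) (v : ι → K) (n : ι → ℕ) :
    ∏ i, v i ^ n i =
      (∏ i, (v i ^ p) ^ (n i / p)) * pMonomial p v fun i => ⟨n i % p, Nat.mod_lt _ hp⟩ := by
  simp only [pMonomial, ← Finset.prod_mul_distrib, ← pow_mul, ← pow_add, Nat.div_add_mod]

variable [Fact p.Prime]

theorem adjoin_subset_span_pMonomial {ι : Type*} [Fintype ι] (M : Subfield K) {v : ι → K}
    (hv : ∀ i, v i ^ p ∈ M) :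
    (adjoin M (Set.range v) : Set K) ⊆ Submodule.span M (Set.range (pMonomial p v)) := by
  have hp : p.Prime := Fact.out
  have halg : ∀ x ∈ Set.range v, IsAlgebraic M x := by
    rintro _ ⟨i, rfl⟩
    refine (IsIntegral.of_pow hp.pos ?_).isAlgebraic
    exact isIntegral_algebraMap (x := (⟨v i ^ p, hv i⟩ : M))
  intro x hx
  rw [SetLike.mem_coe, ← mem_toSubalgebra, adjoin_toSubalgebra_of_isAlgebraic halg,
    ← Subalgebra.mem_toSubmodule, Algebra.adjoin_eq_span] at hx
  refine Submodule.span_le.mpr ?_ hx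
  intro y hy
  obtain ⟨n, rfl⟩ := Submonoid.mem_closure_range_iff_of_fintype.mp hy
  rw [prod_pow_eq_mul_pMonomial p hp.pos]
  exact Submodule.smul_mem _ (⟨_, M.prod_mem fun i _ => M.pow_mem (hv i) _⟩ : M)
    (Submodule.subset_span (Set.mem_range_self _))

theorem notMem_adjoin_tail_of_linearIndependent_pMonomial (M : Subfield K) {n : ℕ}
    {v : Fin (n + 1) → K} (hvp : ∀ i, v i ^ p ∈ M) (hv : LinearIndependent M (pMonomial p v)) :
    v 0 ∉ adjoin M (Set.range (Fin.tail v)) := by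
  have hp : p.Prime := Fact.out
  let e₁ : Fin (n + 1) → Fin p := Fin.cons ⟨1, hp.one_lt⟩ fun _ => ⟨0, hp.pos⟩
  have he₁ : pMonomial p v e₁ = v 0 := by
    rw [pMonomial_cons]
    simp [pMonomial]
  intro h
  have hspan := adjoin_subset_span_pMonomial p M (v := Fin.tail v) (fun i => hvp i.succ) h
  refine hv.notMem_span_image (s := {e | e 0 = ⟨0, hp.pos⟩}) (x := e₁) (by simp [e₁])
    (Submodule.span_mono ?_ (he₁ ▸ hspan))
  rintro _ ⟨e, rfl⟩
  exact ⟨Fin.cons ⟨0, hp.pos⟩ e, rfl, by simp [pMonomial_cons]⟩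

variable [CharP K p]

/-- The monomials in `v` are products of powers of `v 0` with monomials in `Fin.tail v`, so the
induction step is the tower law `linearIndependent_smul` for `F ⊆ F(Fin.tail v) ⊆ K`. -/
theorem linearIndependent_pMonomial (F : Subfield K) {n : ℕ} (v : Fin n → K)
    (hvp : ∀ i, v i ^ p ∈ F) (hv : ∀ i, v i ∉ adjoin F (v '' {i}ᶜ)) :
    LinearIndependent F (pMonomial p v) := by
  induction n with
  | zero => exact linearIndependent_unique_iff.mpr (by simp [pMonomial])
  | succ n ih =>
    set L := adjoin F (Set.range (Fin.tail v))
    have htail : LinearIndependent F (pMonomial p (Fin.tail v)) := by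
      refine ih _ (fun i => hvp i.succ) fun i hi => hv i.succ (adjoin.mono _ _ _ ?_ hi)
      rintro _ ⟨j, hj, rfl⟩
      exact ⟨j.succ, (Fin.succ_injective n).ne hj, rfl⟩
    have htailL : LinearIndependent F fun e => (⟨pMonomial p (Fin.tail v) e,
        prod_mem fun i _ => pow_mem (subset_adjoin F _ (Set.mem_range_self i)) _⟩ : L) :=
      .of_comp L.val.toLinearMap htail
    have hpow : LinearIndependent L fun j : Fin p => v 0 ^ (j : ℕ) := by
      refine linearIndependent_pow_of_pow_mem p (b := algebraMap F L (⟨_, hvp 0⟩ : F)) ?_ rfl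
      rintro ⟨x, hx⟩
      refine hv 0 (adjoin.mono _ _ _ ?_ (by rw [← hx]; exact x.2))
      rintro _ ⟨j, rfl⟩
      exact ⟨j.succ, Fin.succ_ne_zero j, rfl⟩
    refine (linearIndependent_equiv' ((Equiv.prodComm _ _).trans
      (Fin.consEquiv fun _ => Fin p)) ?_).mp (linearIndependent_smul htailL hpow)
    ext ⟨e, j⟩
    exact (pMonomial_cons p v j e).trans (mul_comm _ _)

end pMonomial

theorem notMem_adjoin_image_compl {F K ι : Type*} [Field F] [Field K] [Algebra F K] {A : Set K}
    (hA : ∀ a ∈ A, a ∉ adjoin F (A \ {a})) {v : ι → K} (hinj : Function.Injective v)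
    (hvA : ∀ i, v i ∈ A) (i : ι) : v i ∉ adjoin F (v '' {i}ᶜ) := by
  refine fun h => hA _ (hvA i) (adjoin.mono _ _ _ ?_ h)
  rintro _ ⟨j, hj, rfl⟩
  exact ⟨hvA j, hinj.ne hj⟩

/-- If `k ⊆ K` is a separable extension of characteristic `p > 0` (i.e. `k` and `K^p`
are linearly disjoint over `k^p`), then a subset `A` of `k` is `p`-independent in `k`
(no `a ∈ A` lies in `k^p(A \ {a})`) if and only if it is `p`-independent in `K`. -/
theorem pIndep_iff_of_separable {K : Type*} [Field K] (p : ℕ) [Fact p.Prime]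
    [CharP K p] (k : Subfield K)
    (hsep : LinDisj (k.map (frobenius K p)) k ((⊤ : Subfield K).map (frobenius K p)))
    (A : Set K) (hA : A ⊆ (k : Set K)) :
    (∀ a ∈ A, a ∉ k.map (frobenius K p) ⊔ Subfield.closure (A \ {a}))
      ↔ (∀ a ∈ A, a ∉ (⊤ : Subfield K).map (frobenius K p) ⊔ Subfield.closure (A \ {a})) := by
  refine ⟨fun hk a ha hmem => ?_, fun hK a ha hmem =>
    hK a ha (sup_le_sup_right ((Subfield.gc_map_comap _).monotone_l le_top) _ hmem)⟩
  simp only [Subfield.mem_sup_closure_iff_mem_adjoin] at hk hmem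
  obtain ⟨T, hTA, haT⟩ := exists_finset_of_mem_adjoin hmem
  let v : Fin (T.card + 1) → K := Fin.cons a fun i => T.equivFin.symm i
  have hinj : Function.Injective v := Fin.cons_injective_iff.mpr
    ⟨fun ⟨i, hi⟩ => (hTA (hi ▸ (T.equivFin.symm i).2)).2 rfl,
      Subtype.val_injective.comp T.equivFin.symm.injective⟩
  have hvA : ∀ i, v i ∈ A := Fin.cases ha fun i => (hTA (T.equivFin.symm i).2).1
  have hindep : LinearIndependent ((⊤ : Subfield K).map (frobenius K p)) (pMonomial p v) :=
    hsep.linearIndependent (fun e => k.prod_mem fun i _ => k.pow_mem (hA (hvA i)) _)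
      (linearIndependent_pMonomial p _ v (fun i => ⟨v i, hA (hvA i), rfl⟩)
        (notMem_adjoin_image_compl hk hinj hvA))
  refine notMem_adjoin_tail_of_linearIndependent_pMonomial p ((⊤ : Subfield K).map (frobenius K p))
    (fun i => ⟨v i, trivial, rfl⟩) hindep (adjoin.mono _ _ _ (fun x hx => ?_) haT)
  exact ⟨T.equivFin ⟨x, hx⟩, by simp [v, Fin.tail]⟩
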